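/- arXiv:1904.02573 — 2 statements merged into one kernel-verified Lean document; each statement's English description precedes it below -/
import Mathlib

section
/- Let p be a prime, q = p^f, and for n ≥ 1 let U_n = (1+𝔭)/(1+𝔭^n). Then for every k ≥ 1, the p^k-rank of U_n satisfies rk_{p^k}(U_n) = f·(⌊(n−1)/p^{k−1}⌋ − ⌊(n−1)/p^k⌋), where rk_{p^k}(A) := dim_{F_p}(A^{p^{k−1}}/A^{p^k}). -/
open scoped Classical

/-- The ring `F_q[t]/(t^n)` where `q = p^f`. -/
abbrev Rq (p f n : ℕ) [Fact p.Prime] : Type :=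
  Polynomial (GaloisField p f) ⧸
    Ideal.span {(Polynomial.X : Polynomial (GaloisField p f)) ^ n}

/-- The class of `t` in `F_q[t]/(t^n)`. -/
noncomputable def tbar (p f n : ℕ) [Fact p.Prime] : Rq p f n :=
  Ideal.Quotient.mk _ (Polynomial.X : Polynomial (GaloisField p f))

/-- The group of principal units `U_n = (1+𝔭)/(1+𝔭^n)`, realised as the subgroup of
units of `F_q[t]/(t^n)` that are congruent to `1` modulo `t`. -/
noncomputable def Un (p f n : ℕ) [Fact p.Prime] : Subgroup (Rq p f n)ˣ where
  carrier := {u | (u : Rq p f n) - 1 ∈ Ideal.span {tbar p f n}}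
  one_mem' := by simp
  mul_mem' := by
    intro a b ha hb
    simp only [Set.mem_setOf_eq] at ha hb ⊢
    have h : ((a * b : (Rq p f n)ˣ) : Rq p f n) - 1
        = (a : Rq p f n) * ((b : Rq p f n) - 1) + ((a : Rq p f n) - 1) := by
      push_cast; ring
    rw [h]
    exact Ideal.add_mem _ (Ideal.mul_mem_left _ _ hb) ha
  inv_mem' := by
    intro a ha
    have h1 : ((a⁻¹ : (Rq p f n)ˣ) : Rq p f n) * (a : Rq p f n) = 1 := by
      rw [← Units.val_mul, inv_mul_cancel a, Units.val_one]
    have key : ((a⁻¹ : (Rq p f n)ˣ) : Rq p f n) - 1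
        = -(((a⁻¹ : (Rq p f n)ˣ) : Rq p f n) * ((a : Rq p f n) - 1)) := by
      linear_combination h1
    rw [Set.mem_setOf_eq, key]
    exact neg_mem (Ideal.mul_mem_left _ _ ha)

/-- The `ℓ^k`-rank of a finite abelian group `A`, i.e. the `F_ℓ`-dimension of
`A^{ℓ^{k-1}}/A^{ℓ^k}` (encoded as `log_ℓ` of the cardinality of that elementary
abelian quotient). -/
noncomputable def pkRank (A : Type*) [CommGroup A] (ℓ k : ℕ) : ℕ :=
  Nat.log ℓ (Nat.card
    ((powMonoidHom (ℓ ^ (k - 1)) : A →* A).range ⧸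
      ((powMonoidHom (ℓ ^ k) : A →* A).range.subgroupOf
        (powMonoidHom (ℓ ^ (k - 1)) : A →* A).range)))

/-- `α_G(A)`: the number of subgroups of `A` isomorphic to `G`. -/
noncomputable def numIsoSubgroups (G A : Type*) [Group G] [Group A] : ℕ :=
  Nat.card {H : Subgroup A // Nonempty (H ≃* G)}

/-- `|Inj(G,A)|`: the number of injective group homomorphisms `G → A`. -/
noncomputable def numInj (G A : Type*) [Group G] [Group A] : ℕ :=
  Nat.card {φ : G →* A // Function.Injective φ}

/-- The `ℓ`-Sylow subgroup (`ℓ`-primary component) of an abelian group. -/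
noncomputable def primaryPart (G : Type*) [CommGroup G] (ℓ : ℕ) (hℓ : ℓ.Prime) : Subgroup G :=
  @CommGroup.primaryComponent G _ ℓ

/-- The subgroup of elements of order coprime to `p`. -/
def coprimePart (G : Type*) [CommGroup G] (p : ℕ) : Subgroup G where
  carrier := {g | Nat.Coprime (orderOf g) p}
  one_mem' := by simp [Nat.Coprime]
  mul_mem' := by
    intro a b ha hb
    exact Nat.Coprime.coprime_dvd_left ((Commute.all a b).orderOf_mul_dvd_mul_orderOf)
      (Nat.Coprime.mul ha hb)
  inv_mem' := by
    intro a ha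
    simpa [orderOf_inv] using ha

/-- `δ(n,k) = {n/p^k} - {n/p^{k-1}}`. -/
noncomputable def deltaNK (p : ℕ) (n : ℤ) (k : ℕ) : ℝ :=
  Int.fract ((n : ℝ) / (p : ℝ) ^ k) - Int.fract ((n : ℝ) / (p : ℝ) ^ (k - 1))

/-- `α_p(G) = Σ_{k=1}^e (p-1)/p^k · r_k(G)`. -/
noncomputable def alphaP (p e : ℕ) (G : Type*) [CommGroup G] : ℝ :=
  ∑ k ∈ Finset.Icc 1 e, ((p : ℝ) - 1) / (p : ℝ) ^ k * (pkRank G p k : ℝ)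

/-- `δ_G(n) = -α_p(G) + Σ_{k=1}^e r_k(G)·δ(n-1,k)`. -/
noncomputable def deltaG (p e : ℕ) (G : Type*) [CommGroup G] (n : ℤ) : ℝ :=
  -alphaP p e G + ∑ k ∈ Finset.Icc 1 e, (pkRank G p k : ℝ) * deltaNK p (n - 1) k

/-- `ε(G,q,n)` with `q = p^f`. -/
noncomputable def epsilonGQN (p e f : ℕ) (G : Type*) [CommGroup G] (n : ℕ) : ℝ :=
  ∏ k ∈ Finset.Icc 1 e, ∏ j ∈ Finset.range (pkRank G p k - pkRank G p (k + 1)),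
    (1 - (p : ℝ) ^ ((pkRank G p (k + 1) : ℤ) + j - 1) /
      ((p : ℝ) ^ f) ^ (((p : ℝ) - 1) * ((n : ℝ) - 1) / (p : ℝ) ^ k + deltaNK p ((n : ℤ) - 1) k))

/-!
In characteristic `p` we have `(x - 1) ^ p ^ m = x ^ p ^ m - 1`, so `u ↦ u - 1` identifies the
kernel of the `p ^ m`-th power map on `U_n` with the elements `x` of `F_q[t]/(t^n)` satisfying
`x ^ p ^ m = 0`, which form the ideal `(t ^ (⌊(n-1)/p^m⌋ + 1))` of order `q ^ (n - 1 - ⌊(n-1)/p^m⌋)`.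
As `|U_n| = q ^ (n - 1)`, the image `U_n ^ p ^ m` has order `q ^ ⌊(n-1)/p^m⌋`, and the `p^k`-rank
is the base-`p` logarithm of the index of `U_n ^ p ^ k` in `U_n ^ p ^ (k-1)`.
-/

open Polynomial

theorem Polynomial.X_pow_dvd_pow_iff {R : Type*} [CommRing R] [IsDomain R] {g : R[X]}
    {n N : ℕ} (hn : 1 ≤ n) (hN : 0 < N) :
    X ^ n ∣ g ^ N ↔ X ^ ((n - 1) / N + 1) ∣ g := by
  rw [pow_dvd_iff_le_emultiplicity, pow_dvd_iff_le_emultiplicity, emultiplicity_pow prime_X]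
  cases emultiplicity X g using ENat.recTopCoe with
  | top => simp [ENat.mul_top, hN.ne']
  | coe e =>
    norm_cast
    rw [Nat.add_one_le_iff, Nat.div_lt_iff_lt_mul hN, mul_comm]
    omega

section TruncatedPolynomial

variable {K : Type*} [Field K] {n : ℕ}

theorem span_mk_X_pow_eq_map (a : ℕ) :
    Ideal.span {Ideal.Quotient.mk (Ideal.span {(X : K[X]) ^ n}) X ^ a}
      = (Ideal.span {(X : K[X]) ^ a}).map (Ideal.Quotient.mk _) := by
  rw [Ideal.map_span, Set.image_singleton, map_pow]

theorem span_X_pow_le_span_X_pow {a b : ℕ} (h : a ≤ b) :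
    Ideal.span {(X : K[X]) ^ b} ≤ Ideal.span {(X : K[X]) ^ a} :=
  Ideal.span_singleton_le_span_singleton.2 (pow_dvd_pow X h)

theorem pow_eq_zero_iff_mem_span_mk_X_pow (hn : 1 ≤ n) {N : ℕ} (hN : 0 < N)
    (x : K[X] ⧸ Ideal.span {(X : K[X]) ^ n}) :
    x ^ N = 0 ↔ x ∈ Ideal.span {Ideal.Quotient.mk _ X ^ ((n - 1) / N + 1)} := by
  obtain ⟨g, rfl⟩ := Ideal.Quotient.mk_surjective x
  have hle : (n - 1) / N + 1 ≤ n := by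
    have := Nat.div_le_self (n - 1) N
    omega
  rw [← map_pow, Ideal.Quotient.eq_zero_iff_mem, span_mk_X_pow_eq_map,
    Ideal.mem_quotient_iff_mem (span_X_pow_le_span_X_pow hle), Ideal.mem_span_singleton,
    Ideal.mem_span_singleton, X_pow_dvd_pow_iff hn hN]

theorem charP_quotient_span_X_pow (p : ℕ) [CharP K p] (hn : n ≠ 0) :
    CharP (K[X] ⧸ Ideal.span {(X : K[X]) ^ n}) p := by
  have : Nontrivial (K[X] ⧸ Ideal.span {(X : K[X]) ^ n}) := by
    rw [Ideal.Quotient.nontrivial_iff, Ne, Ideal.span_singleton_eq_top]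
    exact fun h => hn (natDegree_eq_zero_of_isUnit h ▸ (natDegree_X_pow n).symm)
  exact charP_of_injective_algebraMap' K p

theorem natCard_quotient_span_X_pow :
    Nat.card (K[X] ⧸ Ideal.span {(X : K[X]) ^ n}) = Nat.card K ^ n := by
  have : Module.Finite K (K[X] ⧸ Ideal.span {(X : K[X]) ^ n}) :=
    (AdjoinRoot.powerBasis' (monic_X_pow n)).finite
  rw [Module.natCard_eq_pow_finrank (K := K), finrank_quotient_span_eq_natDegree,
    natDegree_X_pow]

theorem natCard_span_mk_X_pow [Finite K] {a : ℕ} (ha : a ≤ n) :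
    Nat.card (Ideal.span {Ideal.Quotient.mk (Ideal.span {(X : K[X]) ^ n}) X ^ a})
      = Nat.card K ^ (n - a) := by
  rw [span_mk_X_pow_eq_map]
  have key := Submodule.card_eq_card_quotient_mul_card
    ((Ideal.span {(X : K[X]) ^ a}).map (Ideal.Quotient.mk (Ideal.span {(X : K[X]) ^ n})))
  rw [Nat.card_congr (DoubleQuot.quotQuotEquivQuotOfLE (span_X_pow_le_span_X_pow ha)).toEquiv,
    natCard_quotient_span_X_pow, natCard_quotient_span_X_pow,
    ← pow_sub_mul_pow (Nat.card K) ha] at key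
  exact (Nat.eq_of_mul_eq_mul_right (pow_pos Nat.card_pos a) key).symm

end TruncatedPolynomial

section PrincipalUnits

variable {R : Type*} [CommRing R]

noncomputable def unitsSubOneMemEquiv (I : Ideal R) (hI : I ≤ nilradical R) :
    {u : Rˣ // (u : R) - 1 ∈ I} ≃ I where
  toFun u := ⟨u.1 - 1, u.2⟩
  invFun x := ⟨(mem_nilradical.1 (hI x.2)).isUnit_one_add.unit, by simp⟩
  left_inv u := Subtype.ext (Units.ext (by simp))
  right_inv x := Subtype.ext (by simp)

theorem sub_one_pow_expChar_pow_eq_zero_iff (p : ℕ) [ExpChar R p] (m : ℕ) (x : R) :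
    (x - 1) ^ p ^ m = 0 ↔ x ^ p ^ m = 1 := by
  rw [sub_pow_expChar_pow, one_pow, sub_eq_zero]

end PrincipalUnits

theorem pkRank_eq_sub_of_card_range {A : Type*} [CommGroup A] {ℓ k a b : ℕ} (hℓ : 1 < ℓ)
    (ha : Nat.card (powMonoidHom (ℓ ^ (k - 1)) : A →* A).range = ℓ ^ a)
    (hb : Nat.card (powMonoidHom (ℓ ^ k) : A →* A).range = ℓ ^ b) :
    pkRank A ℓ k = a - b := by
  have hle : (powMonoidHom (ℓ ^ k) : A →* A).range ≤ (powMonoidHom (ℓ ^ (k - 1))).range := by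
    rintro _ ⟨y, rfl⟩
    obtain ⟨c, hc⟩ := pow_dvd_pow ℓ (Nat.sub_le k 1)
    exact ⟨y ^ c, by simp only [powMonoidHom_apply, ← pow_mul, hc, mul_comm]⟩
  have hcard := Subgroup.card_eq_card_quotient_mul_card_subgroup
    (((powMonoidHom (ℓ ^ k) : A →* A).range).subgroupOf (powMonoidHom (ℓ ^ (k - 1))).range)
  rw [Nat.card_congr (Subgroup.subgroupOfEquivOfLe hle).toEquiv, ha, hb] at hcard
  have hba : b ≤ a := (Nat.pow_dvd_pow_iff_le_right hℓ).1 (Dvd.intro_left _ hcard.symm)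
  rw [← pow_sub_mul_pow ℓ hba] at hcard
  rw [pkRank, ← Nat.eq_of_mul_eq_mul_right (pow_pos (by omega) b) hcard, Nat.log_pow hℓ]

section Un

variable (p f n : ℕ) [Fact p.Prime]

theorem span_tbar_le_nilradical : Ideal.span {tbar p f n} ≤ nilradical (Rq p f n) := by
  rw [Ideal.span_singleton_le_iff_mem, mem_nilradical]
  refine ⟨n, ?_⟩
  rw [tbar, ← map_pow, Ideal.Quotient.eq_zero_iff_mem]
  exact Ideal.mem_span_singleton_self _

noncomputable def unEquivSpanTbar : Un p f n ≃ Ideal.span {tbar p f n} :=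
  (Equiv.subtypeEquivRight fun _ => Iff.rfl).trans
    (unitsSubOneMemEquiv _ (span_tbar_le_nilradical p f n))

theorem card_Un (hf : f ≠ 0) (hn : 1 ≤ n) : Nat.card (Un p f n) = (p ^ f) ^ (n - 1) := by
  rw [Nat.card_congr (unEquivSpanTbar p f n), ← pow_one (tbar p f n), tbar,
    natCard_span_mk_X_pow hn, GaloisField.card p f hf]

theorem card_ker_powMonoidHom_Un (hf : f ≠ 0) (hn : 1 ≤ n) (m : ℕ) :
    Nat.card (powMonoidHom (α := Un p f n) (p ^ m)).ker
      = (p ^ f) ^ (n - ((n - 1) / p ^ m + 1)) := by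
  have : CharP (Rq p f n) p := charP_quotient_span_X_pow p (by omega)
  have hN : 0 < p ^ m := pow_pos (Fact.out : p.Prime).pos m
  have hle : (n - 1) / p ^ m + 1 ≤ n := by
    have := Nat.div_le_self (n - 1) (p ^ m)
    omega
  let ker_equiv : (powMonoidHom (α := Un p f n) (p ^ m)).ker
      ≃ {x : Ideal.span {tbar p f n} // (x : Rq p f n) ^ p ^ m = 0} :=
    Equiv.subtypeEquiv (unEquivSpanTbar p f n) fun u => by
      change u ^ p ^ m = 1 ↔ (((u : (Rq p f n)ˣ) : Rq p f n) - 1) ^ p ^ m = 0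
      rw [sub_one_pow_expChar_pow_eq_zero_iff, ← Units.val_pow_eq_pow_val, Units.val_eq_one,
        ← Subgroup.coe_pow, OneMemClass.coe_eq_one]
  have nil_mem : ∀ x : Rq p f n, x ^ p ^ m = 0 → x ∈ Ideal.span {tbar p f n} := by
    intro x hx
    rw [← pow_one (tbar p f n)]
    exact Ideal.span_singleton_le_span_singleton.2 (pow_dvd_pow _ (Nat.le_add_left 1 _))
      ((pow_eq_zero_iff_mem_span_mk_X_pow hn hN x).1 hx)
  rw [Nat.card_congr (ker_equiv.trans ((Equiv.subtypeSubtypeEquivSubtype (nil_mem _)).trans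
    (Equiv.subtypeEquivRight (pow_eq_zero_iff_mem_span_mk_X_pow hn hN)))),
    natCard_span_mk_X_pow hle, GaloisField.card p f hf]

theorem card_range_powMonoidHom_Un (hf : f ≠ 0) (hn : 1 ≤ n) (m : ℕ) :
    Nat.card (powMonoidHom (α := Un p f n) (p ^ m)).range = (p ^ f) ^ ((n - 1) / p ^ m) := by
  have hcard := Subgroup.card_eq_card_quotient_mul_card_subgroup
    (powMonoidHom (α := Un p f n) (p ^ m)).ker
  rw [Nat.card_congr (QuotientGroup.quotientKerEquivRange _).toEquiv, card_Un p f n hf hn,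
    card_ker_powMonoidHom_Un p f n hf hn m] at hcard
  have hsplit : (p ^ f) ^ (n - 1)
      = (p ^ f) ^ ((n - 1) / p ^ m) * (p ^ f) ^ (n - ((n - 1) / p ^ m + 1)) := by
    have := Nat.div_le_self (n - 1) (p ^ m)
    rw [← pow_add]
    congr 1
    omega
  rw [hsplit] at hcard
  exact (Nat.eq_of_mul_eq_mul_right (pow_pos (pow_pos (Fact.out : p.Prime).pos f) _) hcard).symm

end Un

theorem stmt_1_general (p f : ℕ) [Fact p.Prime] (hf : 1 ≤ f) (n k : ℕ) (hn : 1 ≤ n) :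
    pkRank (↥(Un p f n)) p k = f * ((n - 1) / p ^ (k - 1) - (n - 1) / p ^ k) := by
  have hf' : f ≠ 0 := Nat.one_le_iff_ne_zero.1 hf
  rw [pkRank_eq_sub_of_card_range (Fact.out : p.Prime).one_lt
      ((card_range_powMonoidHom_Un p f n hf' hn (k - 1)).trans (pow_mul p f _).symm)
      ((card_range_powMonoidHom_Un p f n hf' hn k).trans (pow_mul p f _).symm), Nat.mul_sub]

/-- `rk_{p^k}(U_n) = f·(⌊(n−1)/p^{k−1}⌋ − ⌊(n−1)/p^k⌋)`. -/
theorem stmt_1 (p f : ℕ) [Fact p.Prime] (hf : 1 ≤ f) (n k : ℕ) (hn : 1 ≤ n) (hk : 1 ≤ k) :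
    pkRank (↥(Un p f n)) p k = f * ((n - 1) / p ^ (k - 1) - (n - 1) / p ^ k) :=
  stmt_1_general p f hf n k hn
end

section
/- Let ℓ be a prime and let a ≥ d ≥ b ≥ 0 be integers with a > b. Let G = C_{ℓ^a} × C_{ℓ^b} and A = C_{ℓ^a} × C_{ℓ^d}. Then the number of subgroups of A isomorphic to G equals ℓ^{d−b} if a > d, and equals (ℓ+1)·ℓ^{d−b−1} if a = d. Moreover, if a = b or d = 0 (so that G = A), this number of subgroups equals 1. -/
open scoped Classical

/-!
An embedding `e` of `G = ℤ/ℓ^a × ℤ/ℓ^b` into `A = ℤ/ℓ^a × ℤ/ℓ^d` sends `(1, 0)` to an element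
`g` of order `ℓ^a`, so one coordinate of `g` is a unit, and if `d < a` it must be the first.
If `g.1` is a unit, the image of `e` is the "slope subgroup" `{(x, y) | y ≡ r x mod ℓ^(d-b)}`
with `r = g.2 / g.1`: it contains `g` and the `ℓ^b`-torsion element `e (0, 1)`, and it has the
same order, being isomorphic to `G` via `(x, t) ↦ (x, c x + ℓ^(d-b) t)` for a lift `c` of `r`.
Distinct slopes give distinct subgroups, so for `d < a` there are `ℓ^(d-b)` of them. For `d = a`
the subgroups on which only `g.2` is a unit are the coordinate swaps of the slope subgroups with
non-unit slope, of which there are `ℓ^(a-b-1)`.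
-/

namespace ZMod

variable {ℓ : ℕ}

lemma pow_pred_mul_eq_zero_of_not_isUnit [hℓ : Fact ℓ.Prime] {a : ℕ} (ha : 0 < a)
    {x : ZMod (ℓ ^ a)} (hx : ¬IsUnit x) : (ℓ : ZMod (ℓ ^ a)) ^ (a - 1) * x = 0 := by
  rw [← natCast_zmod_val x, isUnit_natCast_iff_not_dvd_pow hℓ.out ha, not_not] at hx
  obtain ⟨k, hk⟩ := hx
  rw [← natCast_zmod_val x, hk, Nat.cast_mul, ← mul_assoc, ← pow_succ, Nat.sub_add_cancel ha,
    ← Nat.cast_pow, natCast_self, zero_mul]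

lemma isUnit_castHom_pow_iff [hℓ : Fact ℓ.Prime] {a m : ℕ} (hm : 0 < m) (hma : m ≤ a)
    (x : ZMod (ℓ ^ a)) : IsUnit (castHom (pow_dvd_pow ℓ hma) (ZMod (ℓ ^ m)) x) ↔ IsUnit x := by
  rw [← natCast_zmod_val x, map_natCast, isUnit_natCast_iff_not_dvd_pow hℓ.out hm,
    isUnit_natCast_iff_not_dvd_pow hℓ.out (hm.trans_le hma)]

lemma castHom_pow_eq_zero_of_pow_smul_eq_zero [NeZero ℓ] {a b m : ℕ} (hm : m ≤ a - b)
    {x : ZMod (ℓ ^ a)} (hx : ℓ ^ b • x = 0) :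
    castHom (pow_dvd_pow ℓ (hm.trans (a.sub_le b))) (ZMod (ℓ ^ m)) x = 0 := by
  rw [← natCast_zmod_val x, nsmul_eq_mul, ← Nat.cast_mul, natCast_eq_zero_iff] at hx
  rw [← natCast_zmod_val x, map_natCast, natCast_eq_zero_iff]
  refine (pow_dvd_pow ℓ hm).trans (Nat.dvd_of_mul_dvd_mul_left (pow_pos (NeZero.pos ℓ) b) ?_)
  rcases le_total b a with hba | hab
  · rwa [← pow_add, Nat.add_sub_cancel' hba]
  · rw [Nat.sub_eq_zero_of_le hab, pow_zero, mul_one]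
    exact dvd_mul_right _ _

lemma card_not_isUnit [hℓ : Fact ℓ.Prime] {n : ℕ} (hn : 0 < n) :
    Nat.card {x : ZMod (ℓ ^ n) // ¬IsUnit x} = ℓ ^ (n - 1) := by
  have hdvd : ℓ ∣ ℓ ^ n := dvd_pow_self ℓ hn.ne'
  set κ := (castHom hdvd (ZMod ℓ)).toAddMonoidHom
  have hker : ∀ x, ¬IsUnit x ↔ x ∈ κ.ker := fun x => by
    rw [← natCast_zmod_val x, isUnit_natCast_iff_not_dvd_pow hℓ.out hn, not_not,
      AddMonoidHom.mem_ker]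
    change _ ↔ castHom hdvd (ZMod ℓ) _ = 0
    rw [map_natCast, natCast_eq_zero_iff]
  have hcard := κ.ker.card_mul_index
  rw [AddSubgroup.index_ker, AddMonoidHom.range_eq_top_of_surjective _ (castHom_surjective hdvd),
    AddSubgroup.card_top, Nat.card_zmod, Nat.card_zmod] at hcard
  rw [Nat.card_congr (Equiv.subtypeEquivRight hker)]
  apply Nat.eq_of_mul_eq_mul_right hℓ.out.pos
  rw [hcard, ← pow_succ, Nat.sub_add_cancel hn]

/-- The embedding `ZMod (ℓ ^ b) → ZMod (ℓ ^ d)`, `t ↦ ℓ ^ (d - b) * t`. -/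
def powInclusion (ℓ : ℕ) {b d : ℕ} (hbd : b ≤ d) : ZMod (ℓ ^ b) →+ ZMod (ℓ ^ d) :=
  lift (ℓ ^ b) ⟨zmultiplesHom _ ((ℓ : ZMod (ℓ ^ d)) ^ (d - b)), by
    rw [zmultiplesHom_apply, zsmul_eq_mul, Int.cast_natCast, Nat.cast_pow, ← pow_add,
      Nat.add_sub_cancel' hbd, ← Nat.cast_pow, natCast_self]⟩

variable {b d : ℕ} (hbd : b ≤ d)

lemma powInclusion_natCast (k : ℕ) :
    powInclusion ℓ hbd k = (ℓ : ZMod (ℓ ^ d)) ^ (d - b) * k := by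
  rw [← Int.cast_natCast, powInclusion, lift_coe, zmultiplesHom_apply, zsmul_eq_mul, mul_comm,
    Int.cast_natCast]

lemma powInclusion_injective [NeZero ℓ] : Function.Injective (powInclusion ℓ hbd) := by
  refine (lift_injective _).mpr fun k hk => ?_
  rw [zmultiplesHom_apply, zsmul_eq_mul, ← Int.cast_natCast, ← Int.cast_pow, ← Int.cast_mul,
    intCast_zmod_eq_zero_iff_dvd, ← Nat.sub_add_cancel hbd, pow_add, Nat.add_sub_cancel,
    Nat.cast_mul, mul_comm] at hk
  rw [intCast_zmod_eq_zero_iff_dvd]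
  push_cast at hk ⊢
  exact (mul_dvd_mul_iff_right (pow_ne_zero _ (Nat.cast_ne_zero.mpr (NeZero.ne ℓ)))).mp hk

lemma castHom_eq_zero_iff_mem_range_powInclusion [NeZero ℓ] (y : ZMod (ℓ ^ d)) :
    castHom (pow_dvd_pow ℓ (d.sub_le b)) (ZMod (ℓ ^ (d - b))) y = 0 ↔
      y ∈ (powInclusion ℓ hbd).range := by
  constructor
  · rw [← natCast_zmod_val y, map_natCast, natCast_eq_zero_iff]
    rintro ⟨k, hk⟩
    exact ⟨k, by rw [powInclusion_natCast, hk, Nat.cast_mul, Nat.cast_pow]⟩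
  · rintro ⟨t, rfl⟩
    rw [← natCast_zmod_val t, powInclusion_natCast, map_mul, map_pow, map_natCast, map_natCast,
      ← Nat.cast_pow, natCast_self, zero_mul]

end ZMod

open ZMod

section Slope

variable {m n k : ℕ} (hn : m ∣ n) (hk : m ∣ k)

def slopeSubgroup (r : ZMod m) : AddSubgroup (ZMod n × ZMod k) :=
  ((castHom hk (ZMod m)).toAddMonoidHom.comp (AddMonoidHom.snd _ _) -
    (AddMonoidHom.mulLeft r).comp
      ((castHom hn (ZMod m)).toAddMonoidHom.comp (AddMonoidHom.fst _ _))).ker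

variable {hn hk} in
lemma mem_slopeSubgroup {r : ZMod m} {p : ZMod n × ZMod k} :
    p ∈ slopeSubgroup hn hk r ↔ castHom hk (ZMod m) p.2 = r * castHom hn (ZMod m) p.1 := by
  simp [slopeSubgroup, sub_eq_zero]

lemma slopeSubgroup_injective : Function.Injective (slopeSubgroup hn hk) := by
  intro r r' h
  obtain ⟨z, rfl⟩ := intCast_surjective r
  have h1 : ((1 : ZMod n), (z : ZMod k)) ∈ slopeSubgroup hn hk r' := by
    rw [← h, mem_slopeSubgroup, map_intCast, map_one, mul_one]
  rwa [mem_slopeSubgroup, map_intCast, map_one, mul_one] at h1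

lemma isUnit_of_slopeSubgroup_eq_map_prodComm {r r' : ZMod m}
    (h : slopeSubgroup hn hn r =
      (slopeSubgroup hn hn r').map (AddEquiv.prodComm : ZMod n × ZMod n ≃+ _).toAddMonoidHom) :
    IsUnit r' := by
  obtain ⟨z, rfl⟩ := intCast_surjective r
  have h1 : ((1 : ZMod n), (z : ZMod n)) ∈ slopeSubgroup hn hn z := by
    rw [mem_slopeSubgroup, map_intCast, map_one, mul_one]
  rw [h, AddSubgroup.mem_map_equiv, mem_slopeSubgroup] at h1
  change castHom hn (ZMod m) 1 = r' * castHom hn (ZMod m) (z : ZMod n) at h1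
  rw [map_one, map_intCast] at h1
  exact .of_mul_eq_one _ h1.symm

end Slope

section PrimePower

variable {ℓ a b d : ℕ}

lemma nonempty_addEquiv_slopeSubgroup [NeZero ℓ] (hda : d ≤ a) (hbd : b ≤ d)
    (r : ZMod (ℓ ^ (d - b))) :
    Nonempty (ZMod (ℓ ^ a) × ZMod (ℓ ^ b) ≃+
      slopeSubgroup (pow_dvd_pow ℓ ((d.sub_le b).trans hda))
        (pow_dvd_pow ℓ (d.sub_le b)) r) := by
  obtain ⟨c, rfl⟩ := castHom_surjective (pow_dvd_pow ℓ (d.sub_le b)) r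
  have hκ : ∀ x : ZMod (ℓ ^ a), castHom (pow_dvd_pow ℓ (d.sub_le b)) (ZMod (ℓ ^ (d - b)))
      (castHom (pow_dvd_pow ℓ hda) _ x) =
        castHom (pow_dvd_pow ℓ ((d.sub_le b).trans hda)) _ x :=
    fun x => RingHom.congr_fun (castHom_comp (pow_dvd_pow ℓ (d.sub_le b)) (pow_dvd_pow ℓ hda)) x
  let f : ZMod (ℓ ^ a) × ZMod (ℓ ^ b) →+ ZMod (ℓ ^ a) × ZMod (ℓ ^ d) :=
    (AddMonoidHom.fst _ _).prod ((AddMonoidHom.mulLeft c).comp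
      ((castHom (pow_dvd_pow ℓ hda) _).toAddMonoidHom.comp (AddMonoidHom.fst _ _)) +
        (powInclusion ℓ hbd).comp (AddMonoidHom.snd _ _))
  have hf_apply : ∀ p,
      f p = (p.1, c * castHom (pow_dvd_pow ℓ hda) _ p.1 + powInclusion ℓ hbd p.2) :=
    fun _ => rfl
  have hf : ∀ p, f p ∈ slopeSubgroup (pow_dvd_pow ℓ ((d.sub_le b).trans hda))
      (pow_dvd_pow ℓ (d.sub_le b)) (castHom (pow_dvd_pow ℓ (d.sub_le b)) _ c) := by
    intro p
    rw [hf_apply, mem_slopeSubgroup, map_add, map_mul, hκ,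
      (castHom_eq_zero_iff_mem_range_powInclusion hbd _).mpr ⟨p.2, rfl⟩, add_zero]
  refine ⟨AddEquiv.ofBijective (f.codRestrict _ hf) ⟨?_, ?_⟩⟩
  · refine (injective_iff_map_eq_zero _).mpr fun p hp => ?_
    have hp' : f p = 0 := congrArg Subtype.val hp
    obtain ⟨h1, h2⟩ := Prod.mk_eq_zero.mp ((hf_apply p).symm.trans hp')
    rw [h1, map_zero, mul_zero, zero_add, ← map_zero (powInclusion ℓ hbd)] at h2
    exact Prod.ext h1 (powInclusion_injective hbd h2)
  · rintro ⟨q, hq⟩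
    obtain ⟨t, ht⟩ := (castHom_eq_zero_iff_mem_range_powInclusion hbd
      (q.2 - c * castHom (pow_dvd_pow ℓ hda) _ q.1)).mp
        (by rw [map_sub, map_mul, hκ, mem_slopeSubgroup.mp hq, sub_self])
    exact ⟨(q.1, t), Subtype.ext (show f (q.1, t) = q by rw [hf_apply, ht, add_sub_cancel])⟩

section Classification

variable {H : AddSubgroup (ZMod (ℓ ^ a) × ZMod (ℓ ^ d))}

lemma pow_pred_smul_ne_zero (hℓ : 1 < ℓ) (ha : 0 < a)
    (e : ZMod (ℓ ^ a) × ZMod (ℓ ^ b) ≃+ H) :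
    ℓ ^ (a - 1) • (e (1, 0) : ZMod (ℓ ^ a) × ZMod (ℓ ^ d)) ≠ 0 := by
  rw [← AddSubgroup.coe_nsmul, ← map_nsmul, ne_eq, ZeroMemClass.coe_eq_zero,
    EmbeddingLike.map_eq_zero_iff, Prod.smul_mk, smul_zero, Prod.mk_eq_zero, nsmul_one,
    natCast_eq_zero_iff, Nat.pow_dvd_pow_iff_le_right hℓ]
  omega

lemma isUnit_fst_of_lt [hℓ : Fact ℓ.Prime] (hda : d < a)
    (e : ZMod (ℓ ^ a) × ZMod (ℓ ^ b) ≃+ H) :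
    IsUnit (e (1, 0) : ZMod (ℓ ^ a) × ZMod (ℓ ^ d)).1 := by
  by_contra hu
  refine pow_pred_smul_ne_zero hℓ.out.one_lt (by omega) e (Prod.ext ?_ ?_)
  · rw [Prod.smul_fst, nsmul_eq_mul, Nat.cast_pow]
    exact pow_pred_mul_eq_zero_of_not_isUnit (by omega) hu
  · rw [Prod.smul_snd, nsmul_eq_mul, (natCast_eq_zero_iff _ _).mpr (pow_dvd_pow ℓ (by omega)),
      zero_mul]
    rfl

lemma isUnit_fst_or_isUnit_snd [hℓ : Fact ℓ.Prime] (ha : 0 < a)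
    {H : AddSubgroup (ZMod (ℓ ^ a) × ZMod (ℓ ^ a))}
    (e : ZMod (ℓ ^ a) × ZMod (ℓ ^ b) ≃+ H) :
    IsUnit (e (1, 0) : ZMod (ℓ ^ a) × ZMod (ℓ ^ a)).1 ∨
      IsUnit (e (1, 0) : ZMod (ℓ ^ a) × ZMod (ℓ ^ a)).2 := by
  by_contra! hu
  refine pow_pred_smul_ne_zero hℓ.out.one_lt ha e (Prod.ext ?_ ?_)
  · rw [Prod.smul_fst, nsmul_eq_mul, Nat.cast_pow]
    exact pow_pred_mul_eq_zero_of_not_isUnit ha hu.1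
  · rw [Prod.smul_snd, nsmul_eq_mul, Nat.cast_pow]
    exact pow_pred_mul_eq_zero_of_not_isUnit ha hu.2

lemma le_slopeSubgroup [NeZero ℓ] (hda : d ≤ a) (hbd : b ≤ d)
    (e : ZMod (ℓ ^ a) × ZMod (ℓ ^ b) ≃+ H) {r : ZMod (ℓ ^ (d - b))}
    (hr : castHom (pow_dvd_pow ℓ (d.sub_le b)) _ (e (1, 0) : ZMod (ℓ ^ a) × ZMod (ℓ ^ d)).2 =
      r * castHom (pow_dvd_pow ℓ ((d.sub_le b).trans hda)) _
        (e (1, 0) : ZMod (ℓ ^ a) × ZMod (ℓ ^ d)).1) :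
    H ≤ slopeSubgroup (pow_dvd_pow ℓ ((d.sub_le b).trans hda))
      (pow_dvd_pow ℓ (d.sub_le b)) r := by
  set y : ZMod (ℓ ^ a) × ZMod (ℓ ^ d) := ((e (0, 1) : H) : ZMod (ℓ ^ a) × ZMod (ℓ ^ d))
  have hy_tors : ℓ ^ b • y = 0 := by
    rw [← AddSubgroup.coe_nsmul, ← map_nsmul, Prod.smul_mk, smul_zero, nsmul_one, natCast_self]
    simp
  have hy : y ∈ slopeSubgroup (pow_dvd_pow ℓ ((d.sub_le b).trans hda))
      (pow_dvd_pow ℓ (d.sub_le b)) r := by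
    rw [mem_slopeSubgroup,
      castHom_pow_eq_zero_of_pow_smul_eq_zero le_rfl (congrArg Prod.snd hy_tors),
      castHom_pow_eq_zero_of_pow_smul_eq_zero (by omega) (congrArg Prod.fst hy_tors), mul_zero]
  intro p hp
  obtain ⟨x, hx⟩ := e.surjective ⟨p, hp⟩
  have hdecomp :
      x = x.1.val • ((1, 0) : ZMod (ℓ ^ a) × ZMod (ℓ ^ b)) + x.2.val • (0, 1) := by
    ext <;> simp
  rw [show p = e x from congrArg Subtype.val hx.symm, hdecomp, map_add, map_nsmul, map_nsmul,
    AddSubgroup.coe_add, AddSubgroup.coe_nsmul, AddSubgroup.coe_nsmul]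
  exact add_mem (nsmul_mem (mem_slopeSubgroup.mpr hr) _) (nsmul_mem hy _)

lemma exists_eq_slopeSubgroup [NeZero ℓ] (hda : d ≤ a) (hbd : b ≤ d)
    (e : ZMod (ℓ ^ a) × ZMod (ℓ ^ b) ≃+ H)
    (hu : IsUnit (e (1, 0) : ZMod (ℓ ^ a) × ZMod (ℓ ^ d)).1) :
    ∃ r, H = slopeSubgroup (pow_dvd_pow ℓ ((d.sub_le b).trans hda))
        (pow_dvd_pow ℓ (d.sub_le b)) r ∧
      castHom (pow_dvd_pow ℓ (d.sub_le b)) _ (e (1, 0) : ZMod (ℓ ^ a) × ZMod (ℓ ^ d)).2 =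
        r * castHom (pow_dvd_pow ℓ ((d.sub_le b).trans hda)) _
          (e (1, 0) : ZMod (ℓ ^ a) × ZMod (ℓ ^ d)).1 := by
  set g : ZMod (ℓ ^ a) × ZMod (ℓ ^ d) := ((e (1, 0) : H) : ZMod (ℓ ^ a) × ZMod (ℓ ^ d))
  set κa := castHom (pow_dvd_pow ℓ ((d.sub_le b).trans hda)) (ZMod (ℓ ^ (d - b)))
  set κd := castHom (pow_dvd_pow ℓ (d.sub_le b)) (ZMod (ℓ ^ (d - b)))
  have hr : κd g.2 = κd g.2 * (κa g.1)⁻¹ * κa g.1 := by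
    rw [mul_assoc, inv_mul_of_unit _ (hu.map κa), mul_one]
  refine ⟨_, AddSubgroup.eq_of_le_of_card_ge (le_slopeSubgroup hda hbd e hr) ?_, hr⟩
  obtain ⟨f⟩ := nonempty_addEquiv_slopeSubgroup hda hbd (κd g.2 * (κa g.1)⁻¹)
  rw [← Nat.card_congr f.toEquiv, Nat.card_congr e.toEquiv]

end Classification

theorem card_addSubgroup_addEquiv_of_lt [Fact ℓ.Prime] (hbd : b ≤ d) (hda : d < a) :
    Nat.card {H : AddSubgroup (ZMod (ℓ ^ a) × ZMod (ℓ ^ d)) //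
      Nonempty (H ≃+ ZMod (ℓ ^ a) × ZMod (ℓ ^ b))} = ℓ ^ (d - b) := by
  let F (r : ZMod (ℓ ^ (d - b))) : {H : AddSubgroup (ZMod (ℓ ^ a) × ZMod (ℓ ^ d)) //
      Nonempty (H ≃+ ZMod (ℓ ^ a) × ZMod (ℓ ^ b))} :=
    ⟨slopeSubgroup _ _ r, (nonempty_addEquiv_slopeSubgroup hda.le hbd r).map AddEquiv.symm⟩
  have hF : F.Bijective := by
    refine ⟨fun r r' h => slopeSubgroup_injective _ _ (congrArg Subtype.val h), ?_⟩
    rintro ⟨H, ⟨e⟩⟩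
    obtain ⟨r, hH, -⟩ := exists_eq_slopeSubgroup hda.le hbd e.symm (isUnit_fst_of_lt hda e.symm)
    exact ⟨r, Subtype.ext hH.symm⟩
  rw [← Nat.card_congr (Equiv.ofBijective F hF), Nat.card_zmod]

theorem card_addSubgroup_addEquiv_of_eq [Fact ℓ.Prime] (hba : b < a) :
    Nat.card {H : AddSubgroup (ZMod (ℓ ^ a) × ZMod (ℓ ^ a)) //
      Nonempty (H ≃+ ZMod (ℓ ^ a) × ZMod (ℓ ^ b))} = ℓ ^ (a - b) + ℓ ^ (a - b - 1) := by
  let σ : ZMod (ℓ ^ a) × ZMod (ℓ ^ a) ≃+ ZMod (ℓ ^ a) × ZMod (ℓ ^ a) :=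
    AddEquiv.prodComm
  have hσ : ∀ K : AddSubgroup (ZMod (ℓ ^ a) × ZMod (ℓ ^ a)),
      (K.map σ.toAddMonoidHom).map σ.toAddMonoidHom = K := fun K => by
    rw [AddSubgroup.map_map]
    exact AddSubgroup.map_id K
  let F : ZMod (ℓ ^ (a - b)) ⊕ {r : ZMod (ℓ ^ (a - b)) // ¬IsUnit r} →
      {H : AddSubgroup (ZMod (ℓ ^ a) × ZMod (ℓ ^ a)) //
        Nonempty (H ≃+ ZMod (ℓ ^ a) × ZMod (ℓ ^ b))}
    | .inl r => ⟨slopeSubgroup _ _ r,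
        (nonempty_addEquiv_slopeSubgroup le_rfl hba.le r).map AddEquiv.symm⟩
    | .inr r => ⟨(slopeSubgroup _ _ r.1).map σ.toAddMonoidHom,
        (nonempty_addEquiv_slopeSubgroup le_rfl hba.le r.1).map fun f =>
          (AddSubgroup.equivMapOfInjective _ _ σ.injective).symm.trans f.symm⟩
  have hinj : F.Injective := by
    rintro (r | r) (r' | r') h <;> replace h := congrArg Subtype.val h
    · exact congrArg Sum.inl (slopeSubgroup_injective _ _ h)
    · exact (r'.2 (isUnit_of_slopeSubgroup_eq_map_prodComm _ h)).elim
    · exact (r.2 (isUnit_of_slopeSubgroup_eq_map_prodComm _ h.symm)).elim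
    · exact congrArg Sum.inr (Subtype.ext
        (slopeSubgroup_injective _ _ (AddSubgroup.map_injective σ.injective h)))
  have hsurj : F.Surjective := by
    rintro ⟨H, ⟨e⟩⟩
    by_cases hu : IsUnit (e.symm (1, 0) : ZMod (ℓ ^ a) × ZMod (ℓ ^ a)).1
    · obtain ⟨r, hH, -⟩ := exists_eq_slopeSubgroup le_rfl hba.le e.symm hu
      exact ⟨.inl r, Subtype.ext hH.symm⟩
    · have hu' := (isUnit_fst_or_isUnit_snd (by omega) e.symm).resolve_left hu
      obtain ⟨r, hH, hr⟩ := exists_eq_slopeSubgroup le_rfl hba.le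
        (e.symm.trans (AddSubgroup.equivMapOfInjective H σ.toAddMonoidHom σ.injective)) hu'
      set κ := castHom (pow_dvd_pow ℓ (a.sub_le b)) (ZMod (ℓ ^ (a - b)))
      change κ (e.symm (1, 0) : ZMod (ℓ ^ a) × ZMod (ℓ ^ a)).1 =
        r * κ (e.symm (1, 0) : ZMod (ℓ ^ a) × ZMod (ℓ ^ a)).2 at hr
      have hr' : ¬IsUnit r := fun hr' =>
        hu <| (isUnit_castHom_pow_iff (m := a - b) (by omega) (a.sub_le b) _).mp <| by
          rw [hr]
          exact hr'.mul (hu'.map κ)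
      exact ⟨.inr ⟨r, hr'⟩, Subtype.ext (show _ = H by rw [← hσ H, hH])⟩
  rw [← Nat.card_congr (Equiv.ofBijective F ⟨hinj, hsurj⟩), Nat.card_sum, Nat.card_zmod,
    card_not_isUnit (by omega)]

end PrimePower

lemma numIsoSubgroups_multiplicative (G A : Type*) [AddGroup G] [AddGroup A] :
    numIsoSubgroups (Multiplicative G) (Multiplicative A) =
      Nat.card {H : AddSubgroup A // Nonempty (H ≃+ G)} :=
  Nat.card_congr <| Subgroup.toAddSubgroup'.toEquiv.subtypeEquiv fun _ =>
    ⟨fun ⟨e⟩ => ⟨e.toAdditive⟩, fun ⟨e⟩ => ⟨e.toMultiplicative⟩⟩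

lemma numIsoSubgroups_self (A : Type*) [Group A] [Finite A] : numIsoSubgroups A A = 1 := by
  have hH : ∀ H : {H : Subgroup A // Nonempty (H ≃* A)}, H.1 = ⊤ := fun ⟨H, ⟨e⟩⟩ =>
    Subgroup.eq_top_of_card_eq H (Nat.card_congr e.toEquiv)
  exact Nat.card_eq_one_iff_unique.mpr
    ⟨⟨fun H K => Subtype.ext ((hH H).trans (hH K).symm)⟩,
      ⟨⟨⊤, ⟨Subgroup.topEquiv⟩⟩⟩⟩

/-- the number of subgroups of `C_{ℓ^a} × C_{ℓ^d}` isomorphic to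
`C_{ℓ^a} × C_{ℓ^b}` for `a ≥ d ≥ b`. -/
theorem stmt_16 (ℓ a b d : ℕ) (hℓ : ℓ.Prime) (hda : d ≤ a) (hbd : b ≤ d) :
    (b < a → d < a →
      numIsoSubgroups (Multiplicative (ZMod (ℓ ^ a) × ZMod (ℓ ^ b)))
        (Multiplicative (ZMod (ℓ ^ a) × ZMod (ℓ ^ d))) = ℓ ^ (d - b)) ∧
    (b < a → a = d →
      numIsoSubgroups (Multiplicative (ZMod (ℓ ^ a) × ZMod (ℓ ^ b)))
        (Multiplicative (ZMod (ℓ ^ a) × ZMod (ℓ ^ d))) = (ℓ + 1) * ℓ ^ (d - b - 1)) ∧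
    (a = b ∨ d = 0 →
      numIsoSubgroups (Multiplicative (ZMod (ℓ ^ a) × ZMod (ℓ ^ b)))
        (Multiplicative (ZMod (ℓ ^ a) × ZMod (ℓ ^ d))) = 1) := by
  have := Fact.mk hℓ
  refine ⟨fun _ hda' => ?_, fun hba had => ?_, fun h => ?_⟩
  · rw [numIsoSubgroups_multiplicative, card_addSubgroup_addEquiv_of_lt hbd hda']
  · subst had
    rw [numIsoSubgroups_multiplicative, card_addSubgroup_addEquiv_of_eq hba,
      ← Nat.sub_add_cancel (Nat.sub_pos_of_lt hba), pow_succ, Nat.add_sub_cancel]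
    ring
  · obtain rfl : d = b := by omega
    exact numIsoSubgroups_self _
end
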